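/- arXiv:1811.03872 — 2 statements merged into one kernel-verified Lean document; each statement's English description precedes it below -/
import Mathlib

section
/- Let X be a compact subset of a Banach space B with thickness exponent τ(X) < 1, and let τ ∈ (τ(X), 1) and β_τ = 1/(1 − τ). Then there is a constant C > 0 such that for every n ∈ ℕ there exist m_n ≤ C·2^{β_τ n τ} and a bounded linear map φ_n : B → ℝ^{m_n} with ‖φ_n‖ ≤ √(m_n) satisfying |φ_n(x − y)| ≥ 2^{−(β_τ n + 1)} whenever x, y ∈ X with ‖x − y‖ ≥ 2^{−n}. -/
open Filter Metric Set Pointwise Topology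

/-- `coverNum X ε` : minimal number of balls of radius `ε` with centres in `X` covering `X`. -/
noncomputable def coverNum {E : Type*} [SeminormedAddCommGroup E] (X : Set E) (ε : ℝ) : ℕ∞ :=
  sInf {n : ℕ∞ | ∃ F : Finset E, ↑F ⊆ X ∧ (X ⊆ ⋃ c ∈ F, Metric.ball c ε) ∧ n = F.card}

/-- extended logarithm of an extended natural number. -/
noncomputable def elog (n : ℕ∞) : EReal :=
  if n = ⊤ then ⊤ else ((Real.log n.toNat : ℝ) : EReal)

/-- The upper box-counting dimension `d_B(X) = limsup_{ε → 0⁺} log N(X,ε) / (-log ε)`. -/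
noncomputable def dimBox {E : Type*} [SeminormedAddCommGroup E] (X : Set E) : EReal :=
  Filter.limsup (fun ε : ℝ => elog (coverNum X ε) / ((-Real.log ε : ℝ) : EReal)) (𝓝[>] 0)

/-- `thickNum X ε` : smallest dimension of a finite-dimensional subspace `V` with
`dist(x, V) ≤ ε` for all `x ∈ X` (`⊤` if none exists). -/
noncomputable def thickNum {E : Type*} [NormedAddCommGroup E] [NormedSpace ℝ E]
    (X : Set E) (ε : ℝ) : ℕ∞ :=
  sInf {n : ℕ∞ | ∃ V : Submodule ℝ E, FiniteDimensional ℝ V ∧ n = Module.finrank ℝ V ∧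
    ∀ x ∈ X, Metric.infDist x (V : Set E) ≤ ε}

/-- The thickness exponent `τ(X) = limsup_{ε → 0⁺} log d(X,ε) / (-log ε)`. -/
noncomputable def thickness {E : Type*} [NormedAddCommGroup E] [NormedSpace ℝ E]
    (X : Set E) : EReal :=
  Filter.limsup (fun ε : ℝ => elog (thickNum X ε) / ((-Real.log ε : ℝ) : EReal)) (𝓝[>] 0)

/-- `dualThickNum X θ ε` : minimal dimension of a subspace `U ⊆ E*` such that for all
`x, y ∈ X` with `‖x - y‖ ≥ ε` some `φ ∈ U` has `|φ(x-y)| ≥ ε^(1+θ)`. -/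
noncomputable def dualThickNum {E : Type*} [NormedAddCommGroup E] [NormedSpace ℝ E]
    (X : Set E) (θ ε : ℝ) : ℕ∞ :=
  sInf {n : ℕ∞ | ∃ U : Submodule ℝ (E →L[ℝ] ℝ), FiniteDimensional ℝ U ∧ n = Module.finrank ℝ U ∧
    ∀ x ∈ X, ∀ y ∈ X, ε ≤ ‖x - y‖ → ∃ φ ∈ U, ε ^ (1 + θ) ≤ |φ (x - y)|}

noncomputable def dualThickTheta {E : Type*} [NormedAddCommGroup E] [NormedSpace ℝ E]
    (X : Set E) (θ : ℝ) : EReal :=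
  Filter.limsup (fun ε : ℝ => elog (dualThickNum X θ ε) / ((-Real.log ε : ℝ) : EReal)) (𝓝[>] 0)

/-- The dual thickness `τ*(X) = lim_{θ → 0⁺} τ*_θ(X)` (the limit exists by monotonicity and
equals the limsup as `θ → 0⁺`). -/
noncomputable def dualThickness {E : Type*} [NormedAddCommGroup E] [NormedSpace ℝ E]
    (X : Set E) : EReal :=
  Filter.limsup (fun θ : ℝ => dualThickTheta X θ) (𝓝[>] 0)

/-- `sigmaNum X α ε` : minimal dimension of a subspace `V ⊆ E*` such that whenever
`x, y ∈ X` with `‖x - y‖ ≥ ε` there is `Φ ∈ V` with `‖Φ‖ = 1` and `|Φ(x-y)| ≥ α ε`. -/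
noncomputable def sigmaNum {E : Type*} [NormedAddCommGroup E] [NormedSpace ℝ E]
    (X : Set E) (α ε : ℝ) : ℕ∞ :=
  sInf {n : ℕ∞ | ∃ V : Submodule ℝ (E →L[ℝ] ℝ), FiniteDimensional ℝ V ∧ n = Module.finrank ℝ V ∧
    ∀ x ∈ X, ∀ y ∈ X, ε ≤ ‖x - y‖ → ∃ Φ ∈ V, ‖Φ‖ = 1 ∧ α * ε ≤ |Φ (x - y)|}

noncomputable def sigmaExp {E : Type*} [NormedAddCommGroup E] [NormedSpace ℝ E]
    (X : Set E) (α : ℝ) : EReal :=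
  Filter.limsup (fun ε : ℝ => elog (sigmaNum X α ε) / ((-Real.log ε : ℝ) : EReal)) (𝓝[>] 0)

/-!
For large `n`, the thickness bound with an exponent `s ∈ (τ(X), τ)` gives a subspace `V` of
dimension `d ≤ 2 ^ (β n τ) / 2` with `dist(x, V) < 2 ^ (-(β n + 2))` on `X`. An Auerbach basis of
`V` (a family of unit vectors maximising `|det|`; its coordinate functionals have norm `≤ 1` by
Cramer's rule), extended to `B` by Hahn–Banach, yields `d` functionals of norm `≤ 1` with
`‖v‖ ≤ d · maxᵢ |fᵢ v|` on `V`; stacking them gives `φ : B → ℝ^d` with `‖φ‖ ≤ √d`. Because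
`β (1 - τ) = 1`, the factor `1 / d` costs exactly `2 ^ (-(β - 1) n)`. The finitely many remaining
`n` are handled by finitely many norming functionals on the compact set `X - X`, and absorbed
into `C`.
-/

open Module Function

namespace Module.Basis

variable {E : Type*} [NormedAddCommGroup E] [NormedSpace ℝ E] {ι : Type*}

structure IsAuerbach (b : Basis ι ℝ E) : Prop where
  norm_eq_one : ∀ i, ‖b i‖ = 1
  abs_coord_le : ∀ i u, |b.coord i u| ≤ ‖u‖

theorem IsAuerbach.norm_le_sum_abs_coord [Fintype ι] {b : Basis ι ℝ E} (hb : b.IsAuerbach)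
    (u : E) : ‖u‖ ≤ ∑ i, |b.coord i u| :=
  calc ‖u‖ = ‖∑ i, b.coord i u • b i‖ := by simp only [Basis.coord_apply, Basis.sum_repr]
    _ ≤ ∑ i, ‖b.coord i u • b i‖ := norm_sum_le _ _
    _ = ∑ i, |b.coord i u| := by
      simp only [_root_.norm_smul, hb.norm_eq_one, Real.norm_eq_abs, mul_one]

theorem smul_norm_inv_mem_pi_sphere (b : Basis ι ℝ E) :
    (fun i => ‖b i‖⁻¹ • b i) ∈ univ.pi fun _ : ι => sphere (0 : E) 1 := fun i _ => by
  simp [_root_.norm_smul, inv_mul_cancel₀ (norm_ne_zero_iff.mpr (b.ne_zero i))]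

variable [Fintype ι] [DecidableEq ι]

theorem continuous_det [FiniteDimensional ℝ E] (b : Basis ι ℝ E) :
    Continuous (b.det : (ι → E) → ℝ) := by
  have h : (b.det : (ι → E) → ℝ) = fun v => (b.toMatrix v).det := funext b.det_apply
  rw [h]
  exact Continuous.matrix_det <| continuous_matrix fun i j =>
    (b.coord i).continuous_of_finiteDimensional.comp (continuous_apply j)

theorem abs_det_smul_norm_inv_pos (b : Basis ι ℝ E) :
    0 < |b.det fun i => ‖b i‖⁻¹ • b i| := by
  have h := b.det.toMultilinearMap.map_smul_univ (fun i => ‖b i‖⁻¹) b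
  simp only [AlternatingMap.coe_multilinearMap, det_self, smul_eq_mul, mul_one] at h
  rw [h, abs_pos]
  exact Finset.prod_ne_zero_iff.mpr fun i _ => inv_ne_zero (norm_ne_zero_iff.mpr (b.ne_zero i))

theorem exists_isMaxOn_abs_det [FiniteDimensional ℝ E] (b : Basis ι ℝ E) :
    ∃ e ∈ univ.pi fun _ : ι => sphere (0 : E) 1,
      IsMaxOn (fun v => |b.det v|) (univ.pi fun _ => sphere 0 1) e :=
  (isCompact_univ_pi fun _ => isCompact_sphere 0 1).exists_isMaxOn
    ⟨_, b.smul_norm_inv_mem_pi_sphere⟩ (continuous_abs.comp b.continuous_det).continuousOn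

theorem abs_det_update_le_of_isMaxOn {b : Basis ι ℝ E} {e : ι → E}
    (he : e ∈ univ.pi fun _ : ι => sphere (0 : E) 1)
    (hmax : IsMaxOn (fun v => |b.det v|) (univ.pi fun _ => sphere 0 1) e) (i : ι) (u : E) :
    |b.det (update e i u)| ≤ ‖u‖ * |b.det e| := by
  rcases eq_or_ne u 0 with rfl | hu
  · simp [AlternatingMap.map_update_zero]
  have hmem : update e i (‖u‖⁻¹ • u) ∈ univ.pi fun _ : ι => sphere (0 : E) 1 := by
    intro j _
    rcases eq_or_ne j i with rfl | hj
    · simp [_root_.norm_smul, inv_mul_cancel₀ (norm_ne_zero_iff.mpr hu)]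
    · simpa [update_of_ne hj] using he j trivial
  calc |b.det (update e i u)| = |b.det (update e i (‖u‖ • ‖u‖⁻¹ • u))| := by
        rw [smul_inv_smul₀ (norm_ne_zero_iff.mpr hu)]
    _ = ‖u‖ * |b.det (update e i (‖u‖⁻¹ • u))| := by
        rw [AlternatingMap.map_update_smul, smul_eq_mul, abs_mul, abs_norm]
    _ ≤ ‖u‖ * |b.det e| := mul_le_mul_of_nonneg_left (hmax hmem) (norm_nonneg u)

/-- Auerbach's lemma: a unit vector family maximising the volume `|b.det|` is a basis whose
coordinate functionals have norm at most one, by Cramer's rule. -/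
theorem exists_isAuerbach [FiniteDimensional ℝ E] (b : Basis ι ℝ E) :
    ∃ b' : Basis ι ℝ E, b'.IsAuerbach := by
  obtain ⟨e, he, hmax⟩ := b.exists_isMaxOn_abs_det
  have hdet : 0 < |b.det e| :=
    b.abs_det_smul_norm_inv_pos.trans_le (hmax b.smul_norm_inv_mem_pi_sphere)
  obtain ⟨hli, hsp⟩ := b.is_basis_iff_det.mpr (isUnit_iff_ne_zero.mpr (abs_pos.mp hdet))
  refine ⟨Basis.mk hli hsp.ge, fun i => by simpa using he i trivial, fun i u => ?_⟩
  have hcramer := congrArg (· u) (b.det_smul_mk_coord_eq_det_update hli hsp.ge i)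
  simp only [LinearMap.smul_apply, smul_eq_mul, MultilinearMap.toLinearMap_apply] at hcramer
  refine le_of_mul_le_mul_left ?_ hdet
  calc |b.det e| * |(Basis.mk hli hsp.ge).coord i u| = |b.det (update e i u)| := by
        rw [← abs_mul, hcramer]; rfl
    _ ≤ ‖u‖ * |b.det e| := abs_det_update_le_of_isMaxOn he hmax i u
    _ = |b.det e| * ‖u‖ := mul_comm _ _

end Module.Basis

section SeparatingMaps

variable {B : Type*} [NormedAddCommGroup B] [NormedSpace ℝ B]

theorem abs_apply_le_norm_of_norm_le_one {f : StrongDual ℝ B} (hf : ‖f‖ ≤ 1) (z : B) :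
    |f z| ≤ ‖z‖ := by
  simpa using f.le_of_opNorm_le hf z

theorem Submodule.exists_dual_norm_le_one_norm_le_sum_abs (V : Submodule ℝ B)
    [FiniteDimensional ℝ V] :
    ∃ f : Fin (finrank ℝ V) → StrongDual ℝ B, (∀ i, ‖f i‖ ≤ 1) ∧
      ∀ u ∈ V, ‖u‖ ≤ ∑ i, |f i u| := by
  obtain ⟨b, hb⟩ := (finBasis ℝ V).exists_isAuerbach
  have hext : ∀ i, ∃ f : StrongDual ℝ B, (∀ u : V, f u = b.coord i u) ∧ ‖f‖ ≤ 1 := fun i => by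
    let g : StrongDual ℝ V := (b.coord i).mkContinuous 1 fun u => by
      simpa using hb.abs_coord_le i u
    obtain ⟨f, hfg, hf⟩ := exists_extension_norm_eq V g
    exact ⟨f, hfg, hf.trans_le (LinearMap.mkContinuous_norm_le _ zero_le_one _)⟩
  choose f hfb hf using hext
  refine ⟨f, hf, fun u hu => ?_⟩
  have h := hb.norm_le_sum_abs_coord ⟨u, hu⟩
  simp only [← hfb] at h
  exact h

theorem exists_le_card_mul_abs_apply {ι : Type*} [Fintype ι] {V : Submodule ℝ B}
    {f : ι → StrongDual ℝ B} (hV : ∀ u ∈ V, ‖u‖ ≤ ∑ i, |f i u|) {u : B} (hu : u ∈ V)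
    (hu₀ : u ≠ 0) : ∃ i, ‖u‖ ≤ Fintype.card ι * |f i u| := by
  have hne : (Finset.univ : Finset ι).Nonempty := by
    by_contra h
    simpa [Finset.not_nonempty_iff_eq_empty.mp h, hu₀] using hV u hu
  obtain ⟨i, -, hi⟩ := Finset.exists_le_of_sum_le hne
    (f := fun _ => ‖u‖) (g := fun i => Fintype.card ι * |f i u|) (by
      simpa [← Finset.mul_sum] using mul_le_mul_of_nonneg_left (hV u hu) (Nat.cast_nonneg _))
  exact ⟨i, hi⟩

theorem exists_sub_le_card_mul_abs_apply {ι : Type*} [Fintype ι] {V : Submodule ℝ B}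
    {f : ι → StrongDual ℝ B} (hf : ∀ i, ‖f i‖ ≤ 1) (hV : ∀ u ∈ V, ‖u‖ ≤ ∑ i, |f i u|)
    {z u : B} (hu : u ∈ V) {r : ℝ} (hzu : ‖z - u‖ ≤ r) (hr : r < ‖z‖) :
    ∃ i, ‖z‖ - r ≤ Fintype.card ι * (|f i z| + r) := by
  have hzu' : ‖z‖ - r ≤ ‖u‖ := by linarith [norm_sub_norm_le z u]
  obtain ⟨i, hi⟩ := exists_le_card_mul_abs_apply hV hu (norm_pos_iff.mp (by linarith))
  have hfi : |f i u| ≤ |f i z| + r :=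
    calc |f i u| ≤ |f i z| + |f i (z - u)| := by
          simpa [add_comm, abs_sub_comm] using abs_sub_le (f i u) (f i z) 0
      _ ≤ |f i z| + r := by
          gcongr
          exact abs_apply_le_norm_of_norm_le_one (hf i) _ |>.trans hzu
  exact ⟨i, hi.trans' hzu' |>.trans (by gcongr)⟩

def HasSeparatingMap (X : Set B) (m : ℕ) (a c : ℝ) : Prop :=
  ∃ φ : B →L[ℝ] EuclideanSpace ℝ (Fin m), ‖φ‖ ≤ √m ∧
    ∀ x ∈ X, ∀ y ∈ X, a ≤ ‖x - y‖ → c ≤ ‖φ (x - y)‖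

theorem HasSeparatingMap.mono {X : Set B} {m : ℕ} {a c c' : ℝ} (h : HasSeparatingMap X m a c)
    (hc : c' ≤ c) : HasSeparatingMap X m a c' :=
  let ⟨φ, hφ, hsep⟩ := h
  ⟨φ, hφ, fun x hx y hy hxy => hc.trans (hsep x hx y hy hxy)⟩

theorem hasSeparatingMap_of_forall_exists_le_abs {ι : Type*} [Fintype ι] {X : Set B} {a c : ℝ}
    (f : ι → StrongDual ℝ B) (hf : ∀ i, ‖f i‖ ≤ 1)
    (hsep : ∀ x ∈ X, ∀ y ∈ X, a ≤ ‖x - y‖ → ∃ i, c ≤ |f i (x - y)|) :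
    HasSeparatingMap X (Fintype.card ι) a c := by
  let e := Fintype.equivFin ι
  let φ : B →L[ℝ] EuclideanSpace ℝ (Fin (Fintype.card ι)) :=
    (EuclideanSpace.equiv _ ℝ).symm.toContinuousLinearMap ∘L
      ContinuousLinearMap.pi fun j => f (e.symm j)
  have hφ : ∀ z, ‖φ z‖ = √(∑ j, |f (e.symm j) z| ^ 2) := fun z => by
    simp [φ, EuclideanSpace.norm_eq]
  refine ⟨φ, ?_, fun x hx y hy hxy => ?_⟩
  · refine φ.opNorm_le_bound (by positivity) fun z => ?_
    have hsum : ∑ j, |f (e.symm j) z| ^ 2 ≤ Fintype.card ι * ‖z‖ ^ 2 := by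
      simpa using Finset.sum_le_sum (s := Finset.univ) fun j _ => pow_le_pow_left₀ (abs_nonneg _)
        (abs_apply_le_norm_of_norm_le_one (hf (e.symm j)) z) 2
    rw [hφ, ← Real.sqrt_sq (norm_nonneg z), ← Real.sqrt_mul (Nat.cast_nonneg _)]
    exact Real.sqrt_le_sqrt hsum
  · obtain ⟨i, hi⟩ := hsep x hx y hy hxy
    calc c ≤ |f i (x - y)| := hi
      _ = ‖φ (x - y) (e i)‖ := by simp [φ]
      _ ≤ ‖φ (x - y)‖ := PiLp.norm_apply_le _ _

theorem IsCompact.exists_hasSeparatingMap {X : Set B} (hX : IsCompact X) {a : ℝ} (ha : 0 < a) :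
    ∃ m, HasSeparatingMap X m a (a / 2) := by
  have hK : IsCompact ((fun p : B × B => p.1 - p.2) '' X ×ˢ X) :=
    (hX.prod hX).image (continuous_fst.sub continuous_snd)
  obtain ⟨t, -, hcover⟩ := hK.elim_nhds_subcover (fun c => ball c (a / 4))
    fun c _ => ball_mem_nhds c (by positivity)
  choose g hg hgc using fun c : B => exists_dual_vector'' ℝ c
  simp only [RCLike.ofReal_real_eq_id, id] at hgc
  refine ⟨_, hasSeparatingMap_of_forall_exists_le_abs (fun c : t => g c) (fun c => hg c)
    fun x hx y hy hxy => ?_⟩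
  obtain ⟨c, hct, hzc⟩ := mem_iUnion₂.mp (hcover ⟨(x, y), mk_mem_prod hx hy, rfl⟩)
  rw [mem_ball, dist_eq_norm] at hzc
  refine ⟨⟨c, hct⟩, ?_⟩
  -- `g c` norms `c`, and `x - y` is within `a / 4` of `c`
  have hc : ‖x - y‖ - ‖x - y - c‖ ≤ ‖c‖ := by linarith [norm_sub_norm_le (x - y) c]
  have hgz : ‖c‖ - ‖x - y - c‖ ≤ |g c (x - y)| := by
    have h := abs_apply_le_norm_of_norm_le_one (hg c) (x - y - c)
    rw [map_sub, hgc] at h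
    linarith [le_abs_self (g c (x - y)), (abs_le.mp h).1]
  linarith

theorem hasSeparatingMap_of_forall_infDist_lt {X : Set B} (V : Submodule ℝ B)
    [FiniteDimensional ℝ V] {δ a c : ℝ} (hX : ∀ x ∈ X, infDist x V < δ) (hδa : 2 * δ < a)
    (hc : finrank ℝ V * (c + 2 * δ) ≤ a - 2 * δ) : HasSeparatingMap X (finrank ℝ V) a c := by
  obtain ⟨f, hf, hV⟩ := V.exists_dual_norm_le_one_norm_le_sum_abs
  have hV₀ : (V : Set B).Nonempty := ⟨0, V.zero_mem⟩
  simpa using hasSeparatingMap_of_forall_exists_le_abs f hf fun x hx y hy hxy => by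
    obtain ⟨v, hv, hxv⟩ := (infDist_lt_iff hV₀).mp (hX x hx)
    obtain ⟨w, hw, hyw⟩ := (infDist_lt_iff hV₀).mp (hX y hy)
    have hzu : ‖x - y - (v - w)‖ ≤ 2 * δ := by
      rw [sub_sub_sub_comm]
      calc ‖x - v - (y - w)‖ ≤ ‖x - v‖ + ‖y - w‖ := norm_sub_le _ _
        _ ≤ 2 * δ := by rw [← dist_eq_norm, ← dist_eq_norm]; linarith
    obtain ⟨i, hi⟩ :=
      exists_sub_le_card_mul_abs_apply hf hV (V.sub_mem hv hw) hzu (by linarith)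
    rw [Fintype.card_fin] at hi
    have hd : (0 : ℝ) < finrank ℝ V :=
      (Nat.cast_nonneg _).lt_of_ne fun h => by rw [← h, zero_mul] at hi; linarith
    exact ⟨i, le_of_add_le_add_right (le_of_mul_le_mul_left ((hc.trans (by linarith)).trans hi) hd)⟩

end SeparatingMaps

theorem elog_nonneg (n : ℕ∞) : 0 ≤ elog n := by
  unfold elog
  split_ifs
  · exact le_top
  · exact_mod_cast Real.log_natCast_nonneg _

theorem toNat_le_rpow_of_elog_div_lt {n : ℕ∞} {ε s : ℝ} (hε₀ : 0 < ε) (hε₁ : ε < 1)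
    (h : elog n / ((-Real.log ε : ℝ) : EReal) < s) : n ≠ ⊤ ∧ (n.toNat : ℝ) ≤ ε ^ (-s) := by
  have hlog : 0 < -Real.log ε := neg_pos.mpr (Real.log_neg hε₀ hε₁)
  rw [EReal.div_lt_iff (by exact_mod_cast hlog) (EReal.coe_ne_top _)] at h
  have hn : n ≠ ⊤ := by
    rintro rfl
    simp [elog] at h
  refine ⟨hn, ?_⟩
  rw [elog, if_neg hn, ← EReal.coe_mul, EReal.coe_lt_coe_iff] at h
  rcases Nat.eq_zero_or_pos n.toNat with h0 | hpos
  · rw [h0, Nat.cast_zero]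
    positivity
  · rw [Real.rpow_def_of_pos hε₀]
    exact (Real.log_le_iff_le_exp (by exact_mod_cast hpos)).mp (by linarith)

section Thickness

variable {B : Type*} [NormedAddCommGroup B] [NormedSpace ℝ B]

theorem thickness_nonneg (X : Set B) : 0 ≤ thickness X := by
  refine le_limsup_of_frequently_le' (Eventually.frequently ?_)
  filter_upwards [Ioo_mem_nhdsGT (zero_lt_one' ℝ)] with ε hε
  exact EReal.div_nonneg (elog_nonneg _)
    (EReal.coe_nonneg.mpr (neg_nonneg.mpr (Real.log_nonpos hε.1.le hε.2.le)))

theorem exists_finrank_eq_thickNum {X : Set B} {ε : ℝ} (h : thickNum X ε ≠ ⊤) :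
    ∃ V : Submodule ℝ B, FiniteDimensional ℝ V ∧ (finrank ℝ V : ℕ∞) = thickNum X ε ∧
      ∀ x ∈ X, infDist x V ≤ ε := by
  have hne : {n : ℕ∞ | ∃ V : Submodule ℝ B, FiniteDimensional ℝ V ∧ n = finrank ℝ V ∧
      ∀ x ∈ X, infDist x (V : Set B) ≤ ε}.Nonempty :=
    nonempty_iff_ne_empty.mpr fun he => h (by rw [thickNum, he, sInf_empty])
  obtain ⟨V, hV, hrank, hdist⟩ := csInf_mem hne
  exact ⟨V, hV, hrank.symm, hdist⟩

theorem eventually_exists_finrank_le_rpow_of_thickness_lt {X : Set B} {s : ℝ}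
    (h : thickness X < s) :
    ∀ᶠ ε in 𝓝[>] 0, ∃ V : Submodule ℝ B, FiniteDimensional ℝ V ∧
      (finrank ℝ V : ℝ) ≤ ε ^ (-s) ∧ ∀ x ∈ X, infDist x V ≤ ε := by
  filter_upwards [eventually_lt_of_limsup_lt h, Ioo_mem_nhdsGT (zero_lt_one' ℝ)] with ε hε hε₁
  obtain ⟨hne, hle⟩ := toNat_le_rpow_of_elog_div_lt hε₁.1 hε₁.2 hε
  obtain ⟨V, hV, hrank, hdist⟩ := exists_finrank_eq_thickNum hne
  refine ⟨V, hV, ?_, hdist⟩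
  rwa [← hrank, ENat.toNat_natCast] at hle

end Thickness

theorem hasSeparatingMap_two_rpow_of_finrank_le {B : Type*} [NormedAddCommGroup B]
    [NormedSpace ℝ B] {X : Set B} {β τ t : ℝ} (hβ₁ : 1 ≤ β) (hβτ : β * (1 - τ) = 1) (ht : 0 ≤ t)
    (V : Submodule ℝ B) [FiniteDimensional ℝ V] (hdim : (finrank ℝ V : ℝ) ≤ 2 ^ (β * t * τ) / 2)
    (hdist : ∀ x ∈ X, infDist x V ≤ 2 ^ (-(β * t + 3))) :
    HasSeparatingMap X (finrank ℝ V) (2 ^ (-t)) (2 ^ (-(β * t + 1))) := by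
  set D := (2 : ℝ) ^ (-(β * t)) with hD
  have hpow (k : ℕ) : (2 : ℝ) ^ (-(β * t + k)) = D / 2 ^ k := by
    rw [neg_add, Real.rpow_add two_pos, ← hD, Real.rpow_neg two_pos.le, Real.rpow_natCast,
      div_eq_mul_inv]
  have hD₈ : (2 : ℝ) ^ (-(β * t + 3)) = D / 8 := by
    rw [show (3 : ℝ) = (3 : ℕ) by norm_num, hpow]
    norm_num
  have hD₂ : (2 : ℝ) ^ (-(β * t + 1)) = D / 2 := by
    rw [show (1 : ℝ) = (1 : ℕ) by norm_num, hpow]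
    norm_num
  have hDτ : D * 2 ^ (β * t * τ) = 2 ^ (-t) := by
    rw [hD, ← Real.rpow_add two_pos]
    congr 1
    linear_combination (-t) * hβτ
  have hDt : D ≤ 2 ^ (-t) := Real.rpow_le_rpow_of_exponent_le one_le_two (by nlinarith)
  have hdimD : (finrank ℝ V : ℝ) * D ≤ 2 ^ (-t) / 2 := by
    rw [← hDτ]
    nlinarith [Real.rpow_pos_of_pos two_pos (-(β * t))]
  have hD₀ : 0 < D := by positivity
  exact hD₂ ▸ hasSeparatingMap_of_forall_infDist_lt V (δ := D / 4)
    (fun x hx => (hdist x hx).trans_lt (by rw [hD₈]; linarith)) (by linarith) (by linarith)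

theorem eventually_hasSeparatingMap_of_thickness_lt {B : Type*} [NormedAddCommGroup B]
    [NormedSpace ℝ B] {X : Set B} {s τ : ℝ} (hs : thickness X < s) (hsτ : s < τ) (hτ : τ < 1) :
    ∀ᶠ n : ℕ in atTop, ∃ m : ℕ, (m : ℝ) ≤ 2 ^ (1 / (1 - τ) * n * τ) ∧
      HasSeparatingMap X m (2 ^ (-(n : ℝ))) (2 ^ (-(1 / (1 - τ) * n + 1))) := by
  set β := 1 / (1 - τ) with hβ
  have hs₀ : 0 ≤ s := by exact_mod_cast (thickness_nonneg X).trans hs.le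
  have hβ₁ : 1 ≤ β := by rw [hβ, le_div_iff₀ (by linarith)]; linarith
  have hscale : Tendsto (fun n : ℕ => (2 : ℝ) ^ (-(β * n + 3))) atTop (𝓝[>] 0) :=
    tendsto_nhdsWithin_iff.mpr ⟨(tendsto_rpow_atBot_of_base_gt_one 2 one_lt_two).comp
      (tendsto_neg_atTop_atBot.comp (tendsto_atTop_add_const_right _ 3
        (tendsto_natCast_atTop_atTop.const_mul_atTop (by linarith)))),
      Eventually.of_forall fun n => mem_Ioi.mpr (by positivity)⟩
  have hlin : ∀ᶠ n : ℕ in atTop, s * (β * n + 3) ≤ β * n * τ - 1 :=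
    ((tendsto_natCast_atTop_atTop.const_mul_atTop (mul_pos (sub_pos.2 hsτ) (by linarith)))
      |>.eventually_ge_atTop (3 * s + 1)).mono fun n hn => by nlinarith
  filter_upwards [hscale.eventually (eventually_exists_finrank_le_rpow_of_thickness_lt hs), hlin]
    with n ⟨V, hV, hrank, hdist⟩ hn
  have hdim : (finrank ℝ V : ℝ) ≤ 2 ^ (β * n * τ) / 2 := by
    rw [← Real.rpow_sub_one two_ne_zero]
    rw [← Real.rpow_mul (by positivity)] at hrank
    exact hrank.trans (Real.rpow_le_rpow_of_exponent_le one_le_two (by linear_combination hn))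
  exact ⟨finrank ℝ V, hdim.trans (by linarith [Real.rpow_pos_of_pos two_pos (β * n * τ)]),
    hasSeparatingMap_two_rpow_of_finrank_le hβ₁ (one_div_mul_cancel (by linarith))
      (Nat.cast_nonneg n) V hdim hdist⟩

theorem exists_pos_forall_exists_le_mul_of_eventually {P : ℕ → ℕ → Prop} {g : ℕ → ℝ}
    (hg : ∀ n, 1 ≤ g n) (hP : ∀ n, ∃ m, P n m)
    (hev : ∀ᶠ n in atTop, ∃ m, P n m ∧ (m : ℝ) ≤ g n) :
    ∃ C > (0 : ℝ), ∀ n, ∃ m, P n m ∧ (m : ℝ) ≤ C * g n := by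
  obtain ⟨N, hN⟩ := eventually_atTop.mp hev
  choose M hM using hP
  have hsum : 0 ≤ ∑ k ∈ Finset.range N, (M k : ℝ) := by positivity
  refine ⟨1 + ∑ k ∈ Finset.range N, (M k : ℝ), by positivity, fun n => ?_⟩
  rcases lt_or_ge n N with hn | hn
  · refine ⟨M n, hM n, ?_⟩
    calc (M n : ℝ) ≤ ∑ k ∈ Finset.range N, (M k : ℝ) :=
          Finset.single_le_sum (fun k _ => Nat.cast_nonneg (M k)) (Finset.mem_range.mpr hn)
      _ ≤ (1 + ∑ k ∈ Finset.range N, (M k : ℝ)) * 1 := by linarith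
      _ ≤ _ := by gcongr; exact hg n
  · obtain ⟨m, hm, hle⟩ := hN n hn
    exact ⟨m, hm, hle.trans (le_mul_of_one_le_left (zero_le_one.trans (hg n)) (by linarith))⟩

theorem exists_finite_rank_separating_maps_of_thickness_general {B : Type*}
    [NormedAddCommGroup B] [NormedSpace ℝ B]
    (X : Set B) (hX : IsCompact X)
    (τ : ℝ) (hτ₁ : thickness X < (τ : EReal)) (hτ₂ : τ < 1) :
    ∃ C > (0 : ℝ), ∀ n : ℕ, ∃ m : ℕ,
      (m : ℝ) ≤ C * (2 : ℝ) ^ ((1 / (1 - τ)) * (n : ℝ) * τ) ∧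
      ∃ φ : B →L[ℝ] EuclideanSpace ℝ (Fin m),
        ‖φ‖ ≤ Real.sqrt m ∧
        ∀ x ∈ X, ∀ y ∈ X, (2 : ℝ) ^ (-(n : ℝ)) ≤ ‖x - y‖ →
          (2 : ℝ) ^ (-((1 / (1 - τ)) * (n : ℝ) + 1)) ≤ ‖φ (x - y)‖ := by
  obtain ⟨s, hs, hsτ⟩ := EReal.lt_iff_exists_real_btwn.mp hτ₁
  have hτ₀ : 0 ≤ τ := by exact_mod_cast (thickness_nonneg X).trans hτ₁.le
  have hβ₁ : 1 ≤ 1 / (1 - τ) := by rw [le_div_iff₀ (by linarith)]; linarith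
  have hcompact (n : ℕ) : ∃ m, HasSeparatingMap X m (2 ^ (-(n : ℝ)))
      (2 ^ (-(1 / (1 - τ) * n + 1))) := by
    obtain ⟨m, hm⟩ := hX.exists_hasSeparatingMap (a := 2 ^ (-(n : ℝ))) (by positivity)
    refine ⟨m, hm.mono ?_⟩
    rw [neg_add, Real.rpow_add two_pos, Real.rpow_neg_one, ← div_eq_mul_inv]
    gcongr
    · norm_num
    · nlinarith [(Nat.cast_nonneg n : (0 : ℝ) ≤ n)]
  have hlarge := eventually_hasSeparatingMap_of_thickness_lt hs (EReal.coe_lt_coe_iff.mp hsτ) hτ₂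
  obtain ⟨C, hC, hsep⟩ := exists_pos_forall_exists_le_mul_of_eventually
    (fun n => Real.one_le_rpow one_le_two (by positivity)) hcompact
    (hlarge.mono fun n ⟨m, hm, hφ⟩ => ⟨m, hφ, hm⟩)
  exact ⟨C, hC, fun n => (hsep n).imp fun m ⟨hφ, hm⟩ => ⟨hm, hφ⟩⟩

/-- for `τ(X) < τ < 1` and `β = 1/(1-τ)`, there are linear maps
`φ_n : B → ℝ^{m_n}` with `m_n ≤ C 2^{β n τ}`, `‖φ_n‖ ≤ √m_n` and
`|φ_n(x-y)| ≥ 2^{-(βn+1)}` whenever `x, y ∈ X`, `‖x - y‖ ≥ 2^{-n}`. -/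
theorem exists_finite_rank_separating_maps_of_thickness {B : Type*}
    [NormedAddCommGroup B] [NormedSpace ℝ B] [CompleteSpace B]
    (X : Set B) (hX : IsCompact X) (hτX : thickness X < (1 : EReal))
    (τ : ℝ) (hτ₁ : thickness X < (τ : EReal)) (hτ₂ : τ < 1) :
    ∃ C > (0 : ℝ), ∀ n : ℕ, ∃ m : ℕ,
      (m : ℝ) ≤ C * (2 : ℝ) ^ ((1 / (1 - τ)) * (n : ℝ) * τ) ∧
      ∃ φ : B →L[ℝ] EuclideanSpace ℝ (Fin m),
        ‖φ‖ ≤ Real.sqrt m ∧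
        ∀ x ∈ X, ∀ y ∈ X, (2 : ℝ) ^ (-(n : ℝ)) ≤ ‖x - y‖ →
          (2 : ℝ) ^ (-((1 / (1 - τ)) * (n : ℝ) + 1)) ≤ ‖φ (x - y)‖ :=
  exists_finite_rank_separating_maps_of_thickness_general X hX τ hτ₁ hτ₂
end

section
/- If H is a Hilbert space and X ⊆ H has finite thickness exponent, then the dual thickness is bounded by the thickness: τ*(X) ≤ τ(X). -/
open Filter Metric Set Pointwise Topology

/-!
Let `P` be the orthogonal projection onto a finite-dimensional subspace `V` that approximates
every point of `X` within `δ`. For `x, y ∈ X` with `‖x - y‖ ≥ ε`, put `z = x - y`: the functional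
`⟪Pz / ‖Pz‖, ·⟫`, which lies in the image of `V` in the dual, takes at `z` the value
`‖Pz‖ ≥ ‖z‖ - ‖z - Pz‖ ≥ ε - 2δ`. With `δ = ε^(1+θ)` this gives `d_θ(X, ε) ≤ d(X, ε^(1+θ))`
for small `ε`, hence `τ*_θ(X) ≤ (1 + θ) τ(X)`, and letting `θ → 0` gives `τ*(X) ≤ τ(X)`.
-/

open scoped RealInnerProductSpace

lemma elog_mono {m n : ℕ∞} (hmn : m ≤ n) : elog m ≤ elog n := by
  unfold elog
  rcases eq_or_ne n ⊤ with rfl | hn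
  · simp
  have hm : m ≠ ⊤ := ne_top_of_le_ne_top hn hmn
  simp only [hm, hn, if_false, EReal.coe_le_coe_iff]
  rcases Nat.eq_zero_or_pos m.toNat with h0 | hpos
  · simpa [h0] using Real.log_natCast_nonneg n.toNat
  · exact Real.log_le_log (by exact_mod_cast hpos) (by exact_mod_cast ENat.toNat_le_toNat hmn hn)

/-- `thickness X` and `dualThickTheta X θ` are, definitionally, the growth exponents of
`thickNum X` and `dualThickNum X θ`. -/
noncomputable def growthExponent (N : ℝ → ℕ∞) : EReal :=
  limsup (fun ε : ℝ => elog (N ε) / ((-Real.log ε : ℝ) : EReal)) (𝓝[>] 0)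

lemma EReal.div_le_coe_mul_of_div_lt {a : EReal} {p r c : ℝ} (hp : 0 < p) (hr : 0 < r)
    (h : a / ((p * r : ℝ) : EReal) < c) : a / r ≤ ((p * c : ℝ) : EReal) := by
  rw [EReal.div_lt_iff (by exact_mod_cast mul_pos hp hr) (EReal.coe_ne_top _)] at h
  rw [EReal.div_le_iff_le_mul (by exact_mod_cast hr) (EReal.coe_ne_top _)]
  refine h.le.trans_eq ?_
  norm_cast
  ring

lemma tendsto_rpow_nhdsGT_zero {p : ℝ} (hp : 0 < p) :
    Tendsto (fun ε : ℝ => ε ^ p) (𝓝[>] 0) (𝓝[>] 0) := by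
  refine tendsto_nhdsWithin_iff.mpr
    ⟨?_, eventually_mem_nhdsWithin.mono fun ε hε => Real.rpow_pos_of_pos hε p⟩
  simpa [Real.zero_rpow hp.ne'] using
    (Real.continuousAt_rpow_const 0 p (Or.inr hp.le)).tendsto.mono_left nhdsWithin_le_nhds

lemma growthExponent_le_of_le_comp_rpow {N M : ℝ → ℕ∞} {p c : ℝ} (hp : 0 < p)
    (hNM : ∀ᶠ ε in 𝓝[>] 0, N ε ≤ M (ε ^ p)) (hM : growthExponent M < c) :
    growthExponent N ≤ ((p * c : ℝ) : EReal) := by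
  have hMc := (tendsto_rpow_nhdsGT_zero hp).eventually (eventually_lt_of_limsup_lt hM)
  have hlt1 : ∀ᶠ ε in 𝓝[>] (0 : ℝ), ε < 1 :=
    (eventually_lt_nhds zero_lt_one).filter_mono nhdsWithin_le_nhds
  refine limsup_le_of_le (by isBoundedDefault) ?_
  filter_upwards [hNM, hMc, hlt1, self_mem_nhdsWithin] with ε hNM hMc hε1 (hε0 : 0 < ε)
  have hlog : 0 < -Real.log ε := neg_pos.mpr (Real.log_neg hε0 hε1)
  rw [Real.log_rpow hε0, ← mul_neg] at hMc
  exact (EReal.div_le_div_right_of_nonneg (by exact_mod_cast hlog.le) (elog_mono hNM)).trans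
    (EReal.div_le_coe_mul_of_div_lt hp hlog hMc)

section InnerProductSpace

variable {H : Type*} [NormedAddCommGroup H] [InnerProductSpace ℝ H]

lemma Submodule.norm_sub_starProjection_eq_infDist (K : Submodule ℝ H) [K.HasOrthogonalProjection]
    (x : H) : ‖x - K.starProjection x‖ = infDist x K := by
  rw [starProjection_minimal, infDist_eq_iInf]
  simp [dist_eq_norm]

lemma Submodule.norm_sub_le_inner_normalize_starProjection (K : Submodule ℝ H)
    [K.HasOrthogonalProjection] (z : H) :
    ‖z‖ - ‖z - K.starProjection z‖ ≤ ⟪‖K.starProjection z‖⁻¹ • K.starProjection z, z⟫ := by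
  set w := K.starProjection z
  have hw : ⟪w, z⟫ = ‖w‖ ^ 2 := by
    have h := K.starProjection_inner_eq_zero z w (K.starProjection_apply_mem z)
    rw [inner_sub_left, real_inner_comm, real_inner_self_eq_norm_sq] at h
    linarith
  have hz : ‖z‖ ≤ ‖w‖ + ‖z - w‖ := norm_le_insert' z w
  rw [real_inner_smul_left, hw]
  rcases (norm_nonneg w).eq_or_lt with h0 | hpos
  · rw [← h0, inv_zero, zero_mul]; linarith
  · rw [sq, ← mul_assoc, inv_mul_cancel₀ hpos.ne', one_mul]; linarith

lemma dualThickNum_le_thickNum (X : Set H) {θ ε δ : ℝ} (hδ : ε ^ (1 + θ) + 2 * δ ≤ ε) :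
    dualThickNum X θ ε ≤ thickNum X δ := by
  apply sInf_le_sInf_of_isCoinitialFor
  rintro _ ⟨V, hV, rfl, hXV⟩
  let U := V.map (innerSL ℝ : H →L[ℝ] H →L[ℝ] ℝ).toLinearMap
  refine ⟨Module.finrank ℝ U, ⟨U, inferInstance, rfl, ?_⟩,
    by exact_mod_cast Submodule.finrank_map_le _ V⟩
  intro x hx y hy hxy
  set z := x - y
  have hPz : ‖z - V.starProjection z‖ ≤ 2 * δ := by
    have hsplit : z - V.starProjection z = (x - V.starProjection x) - (y - V.starProjection y) := by
      simp only [z, map_sub]; abel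
    rw [hsplit]
    refine (norm_sub_le _ _).trans ?_
    rw [V.norm_sub_starProjection_eq_infDist, V.norm_sub_starProjection_eq_infDist]
    linarith [hXV x hx, hXV y hy]
  refine ⟨innerSL ℝ (‖V.starProjection z‖⁻¹ • V.starProjection z),
    Submodule.mem_map_of_mem (V.smul_mem _ (V.starProjection_apply_mem z)), ?_⟩
  rw [innerSL_apply_apply]
  linarith [V.norm_sub_le_inner_normalize_starProjection z, le_abs_self
    ⟪‖V.starProjection z‖⁻¹ • V.starProjection z, z⟫]

lemma eventually_three_mul_rpow_le {θ : ℝ} (hθ : 0 < θ) :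
    ∀ᶠ ε in 𝓝[>] (0 : ℝ), 3 * ε ^ (1 + θ) ≤ ε := by
  have hsmall : ∀ᶠ ε in 𝓝[>] (0 : ℝ), ε ^ θ < 1 / 3 :=
    ((tendsto_rpow_nhdsGT_zero hθ).mono_right nhdsWithin_le_nhds).eventually
      (eventually_lt_nhds (by norm_num))
  filter_upwards [hsmall, self_mem_nhdsWithin] with ε hsmall (hε : 0 < ε)
  rw [Real.rpow_add hε, Real.rpow_one]
  nlinarith

lemma dualThickTheta_le_of_thickness_lt (X : Set H) {θ c : ℝ} (hθ : 0 < θ)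
    (hc : thickness X < c) : dualThickTheta X θ ≤ (((1 + θ) * c : ℝ) : EReal) :=
  growthExponent_le_of_le_comp_rpow (N := dualThickNum X θ) (by linarith)
    ((eventually_three_mul_rpow_le hθ).mono fun _ h => dualThickNum_le_thickNum X (by linarith)) hc

end InnerProductSpace

theorem dualThickness_le_thickness_general {H : Type*}
    [NormedAddCommGroup H] [InnerProductSpace ℝ H]
    (X : Set H) :
    dualThickness X ≤ thickness X := by
  refine EReal.le_of_forall_lt_iff_le.mp fun c hc => ?_
  have hlim : Tendsto (fun θ : ℝ => (((1 + θ) * c : ℝ) : EReal)) (𝓝[>] 0) (𝓝 c) := by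
    refine (continuous_coe_real_ereal.tendsto _).comp ?_
    exact ((by fun_prop : Continuous fun θ : ℝ => (1 + θ) * c).tendsto' 0 c (by simp)).mono_left
      nhdsWithin_le_nhds
  calc dualThickness X ≤ limsup (fun θ : ℝ => (((1 + θ) * c : ℝ) : EReal)) (𝓝[>] 0) :=
        limsup_le_limsup (eventually_mem_nhdsWithin.mono fun _ hθ =>
          dualThickTheta_le_of_thickness_lt X hθ hc)
    _ = c := hlim.limsup_eq

/-- in a Hilbert space the dual thickness is bounded above by the
thickness exponent. -/
theorem dualThickness_le_thickness {H : Type*}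
    [NormedAddCommGroup H] [InnerProductSpace ℝ H] [CompleteSpace H]
    (X : Set H) (hτ : thickness X < ⊤) :
    dualThickness X ≤ thickness X :=
  dualThickness_le_thickness_general X
end
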